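/- arXiv:2001.11292 — 6 statements merged into one kernel-verified Lean document; each statement's English description precedes it below -/
import Mathlib

section
/- Let X₁,…,X_k be metric spaces and c : X₁ × ⋯ × X_k → ℝ a Lipschitz function. Suppose A_i ⊆ X_i and f_i : A_i → ℝ satisfy ∑_{i=1}^k f_i(x_i) ≤ c(x₁,…,x_k) for all x_i ∈ A_i. Then there exist Lipschitz functions f̃_i : X_i → ℝ, each with Lipschitz constant at most the Lipschitz constant of c, such that ∑_{i=1}^k f̃_i(x_i) ≤ c(x₁,…,x_k) for all x_i ∈ X_i, and f_i(x_i) ≤ f̃_i(x_i) for all x_i ∈ A_i. -/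
/-!
The functions are improved one coordinate at a time. If `g` satisfies the constraint
`∑ i, g i (x i) ≤ c x` whenever `x j ∈ A j` (and the other coordinates range over some set `D`),
replace `g j` by its `c`-transform
`h t = ⨅ x ∈ D, c (x with x j := t) - ∑ i ≠ j, g i (x i)`.
Each function in this infimum is `L`-Lipschitz in `t` because `c` is, so `h` is `L`-Lipschitz;
the old constraint gives `g j ≤ h` on `A j`, and by construction the new constraint holds for
every value of `x j`. After all `k` coordinates are processed the constraint holds everywhere.
-/

open Finset Function

section Infimum

variable {ι Y : Type*} [PseudoMetricSpace Y] {F : ι → Y → ℝ} {L : ℝ}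

theorem bddBelow_range_of_abs_sub_le (hF : ∀ z a b, |F z a - F z b| ≤ L * dist a b)
    {t₀ : Y} (h₀ : BddBelow (Set.range fun z => F z t₀)) (t : Y) :
    BddBelow (Set.range fun z => F z t) := by
  obtain ⟨m, hm⟩ := h₀
  refine ⟨m - L * dist t t₀, ?_⟩
  rintro _ ⟨z, rfl⟩
  have h₁ := hm ⟨z, rfl⟩
  have h₂ := (abs_le.1 (hF z t t₀)).1
  dsimp only at h₁ ⊢
  linarith

theorem abs_ciInf_sub_ciInf_le [Nonempty ι] (hF : ∀ z a b, |F z a - F z b| ≤ L * dist a b)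
    (hbdd : ∀ t, BddBelow (Set.range fun z => F z t)) (a b : Y) :
    |(⨅ z, F z a) - ⨅ z, F z b| ≤ L * dist a b := by
  have one_sided : ∀ a b, (⨅ z, F z a) - L * dist a b ≤ ⨅ z, F z b := fun a b =>
    le_ciInf fun z => by
      linarith [ciInf_le (hbdd a) z, (abs_le.1 (hF z a b)).2]
  rw [abs_sub_le_iff]
  constructor
  · linarith [one_sided a b]
  · linarith [dist_comm a b ▸ one_sided b a]

end Infimum

section Coordinatewise

variable {ι : Type*} [Fintype ι] [DecidableEq ι] {X : ι → Type*}

theorem sum_dist_update [∀ i, PseudoMetricSpace (X i)] (x : ∀ i, X i) (j : ι) (t t' : X j) :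
    ∑ i, dist (update x j t i) (update x j t' i) = dist t t' := by
  rw [sum_eq_single j fun i _ hi => by simp [update_of_ne hi]] <;> simp

theorem sum_update_apply (g : ∀ i, X i → ℝ) (j : ι) (h : X j → ℝ) (x : ∀ i, X i) :
    ∑ i, update g j h i (x i) = h (x j) + ∑ i ∈ univ.erase j, g i (x i) := by
  rw [← add_sum_erase _ _ (mem_univ j), update_self]
  exact congrArg _ (sum_congr rfl fun i hi => by rw [update_of_ne (ne_of_mem_erase hi)])

theorem sum_apply_update (g : ∀ i, X i → ℝ) (x : ∀ i, X i) (j : ι) (t : X j) :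
    ∑ i, g i (update x j t i) = g j t + ∑ i ∈ univ.erase j, g i (x i) := by
  rw [← add_sum_erase _ _ (mem_univ j), update_self]
  exact congrArg _ (sum_congr rfl fun i hi => by rw [update_of_ne (ne_of_mem_erase hi)])

variable [∀ i, PseudoMetricSpace (X i)] {c : (∀ i, X i) → ℝ} {L : ℝ}

theorem abs_sub_update_le (hc : ∀ x y : ∀ i, X i, |c x - c y| ≤ L * ∑ i, dist (x i) (y i))
    (x : ∀ i, X i) (j : ι) (t t' : X j) :
    |c (update x j t) - c (update x j t')| ≤ L * dist t t' := by
  simpa only [sum_dist_update] using hc (update x j t) (update x j t')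

theorem exists_lipschitz_update_sum_le
    (hc : ∀ x y : ∀ i, X i, |c x - c y| ≤ L * ∑ i, dist (x i) (y i))
    {j : ι} {D : Set (∀ i, X i)} (hD : D.Nonempty) (hDj : ∀ x ∈ D, ∀ t, update x j t ∈ D)
    {A : Set (X j)} (hA : A.Nonempty) (g : ∀ i, X i → ℝ)
    (hg : ∀ x ∈ D, x j ∈ A → ∑ i, g i (x i) ≤ c x) :
    ∃ h : X j → ℝ, (∀ a b, |h a - h b| ≤ L * dist a b) ∧ (∀ a ∈ A, g j a ≤ h a) ∧
      ∀ x ∈ D, ∑ i, update g j h i (x i) ≤ c x := by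
  have : Nonempty D := hD.to_subtype
  set F : D → X j → ℝ := fun x t => c (update x.1 j t) - ∑ i ∈ univ.erase j, g i (x.1 i)
  have hF : ∀ x a b, |F x a - F x b| ≤ L * dist a b := fun x a b => by
    simpa only [F, sub_sub_sub_cancel_right] using abs_sub_update_le hc x.1 j a b
  have le_F : ∀ a ∈ A, ∀ x, g j a ≤ F x a := fun a ha x => by
    have := hg _ (hDj x.1 x.2 a) (by simpa using ha)
    rw [sum_apply_update] at this
    simp only [F]
    linarith
  obtain ⟨a₀, ha₀⟩ := hA
  have hbdd := bddBelow_range_of_abs_sub_le hF ⟨g j a₀, by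
    rintro _ ⟨x, rfl⟩
    exact le_F a₀ ha₀ x⟩
  refine ⟨fun t => ⨅ x, F x t, abs_ciInf_sub_ciInf_le hF hbdd,
    fun a ha => le_ciInf (le_F a ha), fun x hx => ?_⟩
  have hFx : F ⟨x, hx⟩ (x j) = c x - ∑ i ∈ univ.erase j, g i (x i) := by
    simp only [F, update_eq_self]
  rw [sum_update_apply]
  linarith [ciInf_le (hbdd (x j)) ⟨x, hx⟩]

theorem exists_lipschitz_majorant_on_finset
    (hc : ∀ x y : ∀ i, X i, |c x - c y| ≤ L * ∑ i, dist (x i) (y i))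
    (A : ∀ i, Set (X i)) (hA : ∀ i, (A i).Nonempty) (f : ∀ i, X i → ℝ)
    (hf : ∀ x : ∀ i, X i, (∀ i, x i ∈ A i) → ∑ i, f i (x i) ≤ c x) (S : Finset ι) :
    ∃ g : ∀ i, X i → ℝ,
      (∀ i ∈ S, ∀ a b : X i, |g i a - g i b| ≤ L * dist a b) ∧
      (∀ x : ∀ i, X i, (∀ i ∉ S, x i ∈ A i) → ∑ i, g i (x i) ≤ c x) ∧
      (∀ i, ∀ a ∈ A i, f i a ≤ g i a) := by
  induction S using Finset.induction_on with
  | empty =>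
    exact ⟨f, by simp, fun x hx => hf x fun i => hx i (notMem_empty i), fun _ _ _ => le_rfl⟩
  | @insert j S _ ih =>
    obtain ⟨g, hg_lip, hg_sum, hfg⟩ := ih
    set D : Set (∀ i, X i) := {x | ∀ i ∉ insert j S, x i ∈ A i}
    have hD : D.Nonempty := ⟨fun i => (hA i).some, fun i _ => (hA i).some_mem⟩
    have hDj : ∀ x ∈ D, ∀ t, update x j t ∈ D := fun x hx t i hi => by
      rw [update_of_ne fun hij => hi (by simp [hij])]
      exact hx i hi
    obtain ⟨h, hh_lip, hgh, hh_sum⟩ := exists_lipschitz_update_sum_le hc hD hDj (hA j) g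
      fun x hx hxj => hg_sum x fun i hi => by
        by_cases hij : i = j
        · exact hij ▸ hxj
        · exact hx i (by simp [hij, hi])
    refine ⟨update g j h, fun i hi => ?_, hh_sum, fun i a ha => ?_⟩
    · rcases eq_or_ne i j with rfl | hij
      · simpa using hh_lip
      · simpa [update_of_ne hij] using hg_lip i ((mem_insert.1 hi).resolve_left hij)
    · rcases eq_or_ne i j with rfl | hij
      · simpa using (hfg i a ha).trans (hgh a ha)
      · simpa [update_of_ne hij] using hfg i a ha

end Coordinatewise

theorem stmt1_general {k : ℕ} (X : Fin k → Type*) [∀ i, MetricSpace (X i)]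
    (c : (∀ i, X i) → ℝ) (L : ℝ)
    (hc : ∀ x y : ∀ i, X i, |c x - c y| ≤ L * ∑ i, dist (x i) (y i))
    (A : ∀ i, Set (X i)) (hA : ∀ i, (A i).Nonempty)
    (f : ∀ i, X i → ℝ)
    (hf : ∀ x : ∀ i, X i, (∀ i, x i ∈ A i) → ∑ i, f i (x i) ≤ c x) :
    ∃ g : ∀ i, X i → ℝ,
      (∀ i, ∀ a b : X i, |g i a - g i b| ≤ L * dist a b) ∧
      (∀ x : ∀ i, X i, ∑ i, g i (x i) ≤ c x) ∧
      (∀ i, ∀ a ∈ A i, f i a ≤ g i a) := by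
  obtain ⟨g, hg_lip, hg_sum, hfg⟩ := exists_lipschitz_majorant_on_finset hc A hA f hf univ
  exact ⟨g, fun i => hg_lip i (mem_univ i), fun x => hg_sum x fun i hi => absurd (mem_univ i) hi,
    hfg⟩

theorem stmt1 {k : ℕ} (X : Fin k → Type*) [∀ i, MetricSpace (X i)]
    (c : (∀ i, X i) → ℝ) (L : ℝ) (hL : 0 ≤ L)
    (hc : ∀ x y : ∀ i, X i, |c x - c y| ≤ L * ∑ i, dist (x i) (y i))
    (A : ∀ i, Set (X i)) (hA : ∀ i, (A i).Nonempty)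
    (f : ∀ i, X i → ℝ)
    (hf : ∀ x : ∀ i, X i, (∀ i, x i ∈ A i) → ∑ i, f i (x i) ≤ c x) :
    ∃ g : ∀ i, X i → ℝ,
      (∀ i, ∀ a b : X i, |g i a - g i b| ≤ L * dist a b) ∧
      (∀ x : ∀ i, X i, ∑ i, g i (x i) ≤ c x) ∧
      (∀ i, ∀ a ∈ A i, f i a ≤ g i a) :=
  stmt1_general X c L hc A hA f hf
end

section
/- Let X₁,…,X_k be metric spaces and c : X₁ × ⋯ × X_k → ℝ a bounded function with uniform norm M. Suppose f_i : X_i → ℝ, i = 1,…,k, satisfy f_i(x_i) = inf { c(x₁,…,x_k) − ∑_{j≠i} f_j(x_j) : x_j ∈ X_j for j ≠ i } for every x_i ∈ X_i. Then there exist constants h₁,…,h_k ∈ ℝ summing to zero such that the functions f̃_i = f_i + h_i satisfy the same infimum identity and each f̃_i is bounded in absolute value by M · max{k, 3}. -/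
/-!
Each `f i` has oscillation at most `2M`: if `x i = z'`, then moving the `i`-th coordinate of `x`
to `z` changes `c` by at most `2M`, so `f i z - 2M` bounds from below the set whose infimum is
`f i z'`. Hence the suprema `b i = ⨆ z, f i z` are finite with `b i - 2M ≤ f i ≤ b i`. Their total
`t = ∑ i, b i` lies in `[-M, M]`: above because `∑ i, f i (x i) ≤ c x` everywhere, below because
`-M - ∑ j ≠ i, b j` bounds from below the set defining any `f i`. The shifts `h i = t / k - b i`
sum to zero, so they preserve the conjugacy relation, and `|f i + h i| ≤ 2M + |t / k| ≤ 3M`.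
-/

open Finset

theorem sum_ciSup_le_of_forall_sum_le {ι : Type*} [Fintype ι] {X : ι → Type*}
    [∀ i, Nonempty (X i)] {g : ∀ i, X i → ℝ} {C : ℝ}
    (h : ∀ x : ∀ i, X i, ∑ i, g i (x i) ≤ C) : ∑ i, ⨆ z, g i z ≤ C := by
  refine le_of_forall_pos_le_add fun ε hε => ?_
  set δ := ε / (Fintype.card ι + 1)
  have hδ : 0 < δ := by positivity
  choose x hx using fun i => exists_lt_of_lt_ciSup (sub_lt_self (⨆ z, g i z) hδ)
  have hcard : Fintype.card ι * δ ≤ ε := by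
    rw [mul_div_assoc', div_le_iff₀ (by positivity)]
    linarith
  calc ∑ i, ⨆ z, g i z ≤ ∑ i, (g i (x i) + δ) := sum_le_sum fun i _ => by linarith [hx i]
    _ = ∑ i, g i (x i) + Fintype.card ι * δ := by
        rw [sum_add_distrib, sum_const, card_univ, nsmul_eq_mul]
    _ ≤ C + ε := by linarith [h x]

section CConjugate

variable {ι : Type*} [Fintype ι] [DecidableEq ι] {X : ι → Type*}

def IsCConjugate (c : (∀ i, X i) → ℝ) (f : ∀ i, X i → ℝ) : Prop :=
  ∀ i, ∀ xi : X i, IsGLB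
    {r | ∃ x : ∀ j, X j, x i = xi ∧ r = c x - ∑ j ∈ univ.erase i, f j (x j)} (f i xi)

namespace IsCConjugate

variable {c : (∀ i, X i) → ℝ} {f : ∀ i, X i → ℝ} {M : ℝ}

theorem le_sub_sum_erase (hf : IsCConjugate c f) (x : ∀ i, X i) (i : ι) :
    f i (x i) ≤ c x - ∑ j ∈ univ.erase i, f j (x j) :=
  (hf i (x i)).1 ⟨x, rfl, rfl⟩

theorem sum_le [Nonempty ι] (hf : IsCConjugate c f) (x : ∀ i, X i) : ∑ i, f i (x i) ≤ c x := by
  obtain ⟨i⟩ := ‹Nonempty ι›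
  have := hf.le_sub_sum_erase x i
  rw [← add_sum_erase _ _ (mem_univ i)]
  linarith

theorem le_add_two_mul (hf : IsCConjugate c f) (hM : ∀ x, |c x| ≤ M) (i : ι) (z z' : X i) :
    f i z ≤ f i z' + 2 * M := by
  suffices f i z - 2 * M ≤ f i z' by linarith
  refine (hf i z').2 ?_
  rintro _ ⟨x, rfl, rfl⟩
  have hupd := hf.le_sub_sum_erase (Function.update x i z) i
  have hsum : ∑ j ∈ univ.erase i, f j (Function.update x i z j) =
      ∑ j ∈ univ.erase i, f j (x j) :=
    sum_congr rfl fun j hj => by rw [Function.update_of_ne (ne_of_mem_erase hj)]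
  rw [Function.update_self, hsum] at hupd
  linarith [(abs_le.1 (hM x)).1, (abs_le.1 (hM (Function.update x i z))).2]

theorem add_const (hf : IsCConjugate c f) {h : ι → ℝ} (hh : ∑ i, h i = 0) :
    IsCConjugate c (fun i z => f i z + h i) := by
  intro i xi
  have hrest : ∑ j ∈ univ.erase i, h j = -h i := by
    rw [sum_erase_eq_sub (mem_univ i), hh, zero_sub]
  refine ⟨?_, fun w hw => ?_⟩
  · rintro _ ⟨x, hx, rfl⟩
    have := (hf i xi).1 ⟨x, hx, rfl⟩
    rw [sum_add_distrib, hrest]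
    linarith
  · suffices w - h i ≤ f i xi by linarith
    refine (hf i xi).2 ?_
    rintro _ ⟨x, hx, rfl⟩
    have := hw ⟨x, hx, rfl⟩
    rw [sum_add_distrib, hrest] at this
    linarith

theorem bddAbove_range (hf : IsCConjugate c f) (hM : ∀ x, |c x| ≤ M) (i : ι) [Nonempty (X i)] :
    BddAbove (Set.range (f i)) :=
  ⟨f i (Classical.arbitrary _) + 2 * M, by
    rintro _ ⟨z, rfl⟩
    exact hf.le_add_two_mul hM i z _⟩

theorem abs_sub_iSup_le (hf : IsCConjugate c f) (hM : ∀ x, |c x| ≤ M) (i : ι) (z : X i) :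
    |f i z - ⨆ z', f i z'| ≤ 2 * M := by
  have : Nonempty (X i) := ⟨z⟩
  rw [abs_sub_comm, abs_of_nonneg (sub_nonneg.2 (le_ciSup (hf.bddAbove_range hM i) z))]
  linarith [ciSup_le fun z' => hf.le_add_two_mul hM i z' z]

theorem abs_sum_iSup_le [Nonempty ι] [∀ i, Nonempty (X i)] (hf : IsCConjugate c f)
    (hM : ∀ x, |c x| ≤ M) : |∑ i, ⨆ z, f i z| ≤ M := by
  refine abs_le.2 ⟨?_, sum_ciSup_le_of_forall_sum_le fun x =>
    (hf.sum_le x).trans ((le_abs_self _).trans (hM x))⟩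
  obtain ⟨i⟩ := ‹Nonempty ι›
  have hle := fun j (z : X j) => le_ciSup (hf.bddAbove_range hM j) z
  have hlow : -M - ∑ j ∈ univ.erase i, ⨆ z, f j z ≤ f i (Classical.arbitrary _) := by
    refine (hf i _).2 ?_
    rintro _ ⟨x, -, rfl⟩
    have := sum_le_sum fun j (_ : j ∈ univ.erase i) => hle j (x j)
    linarith [(abs_le.1 (hM x)).1]
  rw [← add_sum_erase _ _ (mem_univ i)]
  linarith [hle i (Classical.arbitrary _)]

theorem exists_sum_eq_zero_abs_add_le [Nonempty ι] [∀ i, Nonempty (X i)]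
    (hf : IsCConjugate c f) (hM : ∀ x, |c x| ≤ M) :
    ∃ h : ι → ℝ, ∑ i, h i = 0 ∧ IsCConjugate c (fun i z => f i z + h i) ∧
      ∀ i z, |f i z + h i| ≤ 3 * M := by
  set b : ι → ℝ := fun i => ⨆ z, f i z
  set n : ℝ := (Fintype.card ι : ℝ)
  have hn : 1 ≤ n := Nat.one_le_cast.2 Fintype.card_pos
  have hsum : ∑ i, ((∑ j, b j) / n - b i) = 0 := by
    rw [sum_sub_distrib, sum_const, card_univ, nsmul_eq_mul, mul_div_cancel₀ _ (by positivity),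
      sub_self]
  refine ⟨fun i => (∑ j, b j) / n - b i, hsum, hf.add_const hsum, fun i z => ?_⟩
  have hmean : |(∑ j, b j) / n| ≤ M := by
    rw [abs_div, abs_of_pos (by positivity : 0 < n)]
    exact (div_le_self (abs_nonneg _) hn).trans (hf.abs_sum_iSup_le hM)
  calc |f i z + ((∑ j, b j) / n - b i)| = |(f i z - b i) + (∑ j, b j) / n| := by ring_nf
    _ ≤ |f i z - b i| + |(∑ j, b j) / n| := abs_add_le _ _
    _ ≤ 2 * M + M := add_le_add (hf.abs_sub_iSup_le hM i z) hmean
    _ = 3 * M := by ring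

end IsCConjugate

end CConjugate

theorem stmt2_general {k : ℕ} (X : Fin k → Type*)
    [∀ i, Nonempty (X i)] (c : (∀ i, X i) → ℝ) (M : ℝ)
    (hM : ∀ x, |c x| ≤ M)
    (f : ∀ i, X i → ℝ)
    (hf : ∀ i, ∀ xi : X i, IsGLB
      { r | ∃ x : ∀ j, X j, x i = xi ∧
          r = c x - ∑ j ∈ Finset.univ.erase i, f j (x j) }
      (f i xi)) :
    ∃ h : Fin k → ℝ, ∑ i, h i = 0 ∧
      (∀ i, ∀ xi : X i, IsGLB
        { r | ∃ x : ∀ j, X j, x i = xi ∧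
            r = c x - ∑ j ∈ Finset.univ.erase i, (f j (x j) + h j) }
        (f i xi + h i)) ∧
      (∀ i, ∀ xi : X i, |f i xi + h i| ≤ M * max (k : ℝ) 3) := by
  rcases isEmpty_or_nonempty (Fin k) with _ | _
  · exact ⟨0, by simp, isEmptyElim, isEmptyElim⟩
  obtain ⟨h, hsum, hconj, hbound⟩ := IsCConjugate.exists_sum_eq_zero_abs_add_le hf hM
  have hM0 : 0 ≤ M := (abs_nonneg _).trans (hM fun i => Classical.arbitrary (X i))
  refine ⟨h, hsum, hconj, fun i z => (hbound i z).trans ?_⟩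
  rw [mul_comm]
  exact mul_le_mul_of_nonneg_left (le_max_right _ _) hM0

theorem stmt2 {k : ℕ} (hk : 2 ≤ k) (X : Fin k → Type*) [∀ i, MetricSpace (X i)]
    [∀ i, Nonempty (X i)] (c : (∀ i, X i) → ℝ) (M : ℝ)
    (hM : ∀ x, |c x| ≤ M)
    (f : ∀ i, X i → ℝ)
    (hf : ∀ i, ∀ xi : X i, IsGLB
      { r | ∃ x : ∀ j, X j, x i = xi ∧
          r = c x - ∑ j ∈ Finset.univ.erase i, f j (x j) }
      (f i xi)) :
    ∃ h : Fin k → ℝ, ∑ i, h i = 0 ∧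
      (∀ i, ∀ xi : X i, IsGLB
        { r | ∃ x : ∀ j, X j, x i = xi ∧
            r = c x - ∑ j ∈ Finset.univ.erase i, (f j (x j) + h j) }
        (f i xi + h i)) ∧
      (∀ i, ∀ xi : X i, |f i xi + h i| ≤ M * max (k : ℝ) 3) :=
  stmt2_general X c M hM f hf
end

section
/- Let K ⊆ ℝⁿ be a convex body and let x ∈ K. If γ is an extreme point of the set 𝒜 of Borel probability measures on K with barycentre x, then the support of γ consists of at most n + 1 points. -/
/-! If the support of `γ` contained `n + 2` points, separate them by disjoint open sets `Uᵢ`, each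
of positive measure. The `n + 2` vectors `(γ Uᵢ, ∫_{Uᵢ} y dγ)` of `ℝ × ℝⁿ` are linearly dependent;
the coefficients `cᵢ` of a dependency, scaled so that `|cᵢ| ≤ 1`, give `f = ∑ cᵢ 𝟙_{Uᵢ}` with
`∫ f dγ = 0` and `∫ f(y) y dγ = 0`. Then `(1 + f)γ` and `(1 - f)γ` are probability measures on `K`
with barycentre `x` whose average is `γ`, so extremality forces `f = 0` `γ`-a.e., which is absurd
on `U_{i₀}` where `c_{i₀} ≠ 0`. -/

open MeasureTheory Module Function
open scoped ENNReal

lemma exists_abs_le_one_sum_smul_eq_zero {ι M : Type*} [Fintype ι] [AddCommGroup M] [Module ℝ M]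
    [FiniteDimensional ℝ M] (v : ι → M) (h : finrank ℝ M < Fintype.card ι) :
    ∃ c : ι → ℝ, (∃ i, c i ≠ 0) ∧ (∀ i, |c i| ≤ 1) ∧ ∑ i, c i • v i = 0 := by
  obtain ⟨g, hgv, i, hi⟩ :=
    (Fintype.not_linearIndependent_iff (v := v)).1 fun hv => h.not_ge hv.fintype_card_le_finrank
  have hg : 0 < ‖g‖ := norm_pos_iff.2 fun h0 => hi (congrFun h0 i)
  refine ⟨‖g‖⁻¹ • g, ⟨i, by simp [hi, hg.ne']⟩, fun j => ?_, ?_⟩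
  · rw [Pi.smul_apply, smul_eq_mul, abs_mul, abs_inv, abs_norm, inv_mul_le_one₀ hg]
    exact norm_le_pi_norm g j
  · simp only [Pi.smul_apply, smul_assoc, ← Finset.smul_sum, hgv, smul_zero]

lemma sum_indicator_const_of_mem {ι X : Type*} [Fintype ι] {U : ι → Set X}
    (hU : Pairwise (Disjoint on U)) (c : ι → ℝ) {i : ι} {y : X} (hy : y ∈ U i) :
    ∑ j, (U j).indicator (fun _ => c j) y = c i := by
  rw [Fintype.sum_eq_single i fun j hj => Set.indicator_of_notMem
    (Set.disjoint_left.1 (hU hj.symm) hy) _]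
  exact Set.indicator_of_mem hy _

lemma abs_sum_indicator_const_le_one {ι X : Type*} [Fintype ι] {U : ι → Set X}
    (hU : Pairwise (Disjoint on U)) {c : ι → ℝ} (hc : ∀ i, |c i| ≤ 1) (y : X) :
    |∑ j, (U j).indicator (fun _ => c j) y| ≤ 1 := by
  by_cases hy : ∃ i, y ∈ U i
  · obtain ⟨i, hi⟩ := hy
    rw [sum_indicator_const_of_mem hU c hi]
    exact hc i
  · rw [not_exists] at hy
    simp [Set.indicator_of_notMem (hy _)]

lemma Set.exists_finset_subset_card_eq {α : Type*} {s : Set α} {k : ℕ}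
    (h : (k : ℕ∞) ≤ s.encard) :
    ∃ S : Finset α, ↑S ⊆ s ∧ S.card = k := by
  obtain ⟨t, hts, htk⟩ := Set.exists_subset_encard_eq h
  obtain ⟨S, rfl⟩ := (Set.finite_of_encard_eq_coe htk).exists_finset_coe
  exact ⟨S, hts, by simpa using htk⟩

lemma integrable_id_of_isBounded {E : Type*} [NormedAddCommGroup E] [MeasurableSpace E]
    [SecondCountableTopology E] [BorelSpace E] {γ : Measure E}
    [IsFiniteMeasure γ] {K : Set E} (hK : Bornology.IsBounded K) (hγK : γ Kᶜ = 0) :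
    Integrable id γ := by
  obtain ⟨C, hC⟩ := hK.subset_closedBall 0
  refine .of_bound aestronglyMeasurable_id C ?_
  filter_upwards [measure_eq_zero_iff_ae_notMem.1 hγK] with y hy
  simpa using hC (not_not.1 hy)

namespace MeasureTheory.Measure

variable {α : Type*} [MeasurableSpace α] {γ : Measure α} {f : α → ℝ}

/-- `ENNReal.ofReal` truncates at `0`, so this is the measure `(1 + f) γ` only when `-1 ≤ f`. -/
noncomputable def perturb (γ : Measure α) (f : α → ℝ) : Measure α :=
  γ.withDensity fun y => ENNReal.ofReal (1 + f y)

lemma perturb_absolutelyContinuous : γ.perturb f ≪ γ :=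
  withDensity_absolutelyContinuous _ _

lemma isProbabilityMeasure_perturb [IsProbabilityMeasure γ] (hf : Integrable f γ)
    (hf1 : ∀ y, -1 ≤ f y) (hf0 : ∫ y, f y ∂γ = 0) : IsProbabilityMeasure (γ.perturb f) := by
  have hnn : ∀ y, 0 ≤ 1 + f y := fun y => by linarith [hf1 y]
  have hint : Integrable (fun y => 1 + f y) γ := (integrable_const 1).add hf
  constructor
  rw [perturb, withDensity_apply _ MeasurableSet.univ, restrict_univ,
    ← ofReal_integral_eq_lintegral_ofReal hint (ae_of_all _ hnn),
    integral_add (integrable_const 1) hf, hf0]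
  simp

lemma integral_perturb {E : Type*} [NormedAddCommGroup E] [NormedSpace ℝ E] {g : α → E}
    (hfm : Measurable f) (hf1 : ∀ y, -1 ≤ f y) (hg : Integrable g γ)
    (hfg : Integrable (fun y => f y • g y) γ) :
    ∫ y, g y ∂γ.perturb f = ∫ y, g y ∂γ + ∫ y, f y • g y ∂γ := by
  have hnn : ∀ y, 0 ≤ 1 + f y := fun y => by linarith [hf1 y]
  have hdens : (fun y => ENNReal.ofReal (1 + f y)) = fun y => ((1 + f y).toNNReal : ℝ≥0∞) := rfl
  rw [perturb, hdens,
    integral_withDensity_eq_integral_smul (by fun_prop : Measurable fun y => (1 + f y).toNNReal),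
    ← integral_add hg hfg]
  congr 1 with y
  rw [NNReal.smul_def, Real.coe_toNNReal _ (hnn y), add_smul, one_smul]

lemma half_smul_perturb_add_perturb_neg (hfm : Measurable f) (hf1 : ∀ y, |f y| ≤ 1) :
    (1/2 : ℝ≥0∞) • γ.perturb f + (1/2 : ℝ≥0∞) • γ.perturb (-f) = γ := by
  have hmean : ∀ y, (1/2 : ℝ≥0∞) * ENNReal.ofReal (1 + f y)
      + (1/2 : ℝ≥0∞) * ENNReal.ofReal (1 + -f y) = 1 := by
    intro y
    obtain ⟨h₁, h₂⟩ := abs_le.1 (hf1 y)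
    rw [← mul_add, ← ENNReal.ofReal_add (by linarith) (by linarith),
      show 1 + f y + (1 + -f y) = 2 by ring, ENNReal.ofReal_ofNat, one_div,
      ENNReal.inv_mul_cancel two_ne_zero ENNReal.ofNat_ne_top]
  ext s hs
  rw [add_apply, smul_apply, smul_apply, smul_eq_mul, smul_eq_mul,
    perturb, perturb, withDensity_apply _ hs, withDensity_apply _ hs,
    ← lintegral_const_mul _ (by fun_prop), ← lintegral_const_mul _ (by fun_prop),
    ← lintegral_add_left (by fun_prop)]
  simp only [Pi.neg_apply, hmean, lintegral_const, one_mul, restrict_apply_univ]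

lemma ae_eq_zero_of_perturb_eq_self [SigmaFinite γ] (hfm : Measurable f)
    (h : γ.perturb f = γ) : f =ᵐ[γ] 0 := by
  conv_rhs at h => rw [← withDensity_one (μ := γ)]
  rw [perturb, withDensity_eq_iff_of_sigmaFinite (by fun_prop) (by fun_prop)] at h
  filter_upwards [h] with y hy
  rw [Pi.one_apply, ENNReal.ofReal_eq_one] at hy
  simpa using hy

end MeasureTheory.Measure

section BalancedPerturbation

variable {E : Type*} [NormedAddCommGroup E] [NormedSpace ℝ E] [MeasurableSpace E]

structure IsBalancedPerturbation (γ : Measure E) (f : E → ℝ) : Prop where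
  measurable : Measurable f
  abs_le_one : ∀ y, |f y| ≤ 1
  integral_eq_zero : ∫ y, f y ∂γ = 0
  integral_smul_eq_zero : ∫ y, f y • y ∂γ = 0

namespace IsBalancedPerturbation

variable {γ : Measure E} {f : E → ℝ}

lemma neg (hf : IsBalancedPerturbation γ f) : IsBalancedPerturbation γ (-f) where
  measurable := hf.measurable.neg
  abs_le_one y := by simpa using hf.abs_le_one y
  integral_eq_zero := by simp [integral_neg, hf.integral_eq_zero]
  integral_smul_eq_zero := by simp [neg_smul, integral_neg, hf.integral_smul_eq_zero]

lemma neg_one_le (hf : IsBalancedPerturbation γ f) (y : E) : -1 ≤ f y :=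
  (abs_le.1 (hf.abs_le_one y)).1

lemma integrable [IsFiniteMeasure γ] (hf : IsBalancedPerturbation γ f) : Integrable f γ :=
  .of_bound hf.measurable.aestronglyMeasurable 1 (ae_of_all _ hf.abs_le_one)

lemma isProbabilityMeasure_perturb [IsProbabilityMeasure γ] (hf : IsBalancedPerturbation γ f) :
    IsProbabilityMeasure (γ.perturb f) :=
  Measure.isProbabilityMeasure_perturb hf.integrable hf.neg_one_le hf.integral_eq_zero

lemma integral_id_perturb (hf : IsBalancedPerturbation γ f) (hid : Integrable id γ) :
    ∫ y, y ∂γ.perturb f = ∫ y, y ∂γ := by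
  have hfid : Integrable (fun y => f y • y) γ :=
    hid.bdd_smul 1 hf.measurable.aestronglyMeasurable (ae_of_all _ hf.abs_le_one)
  rw [Measure.integral_perturb (g := fun y => y) hf.measurable hf.neg_one_le hid hfid,
    hf.integral_smul_eq_zero, add_zero]

end IsBalancedPerturbation

variable [FiniteDimensional ℝ E] [BorelSpace E] {γ : Measure E}

lemma exists_isBalancedPerturbation_not_ae_eq_zero [IsFiniteMeasure γ] (hid : Integrable id γ)
    (hsupp : finrank ℝ E + 1 < γ.support.encard) :
    ∃ f, IsBalancedPerturbation γ f ∧ ¬ f =ᵐ[γ] 0 := by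
  obtain ⟨S, hS, hcard⟩ := Set.exists_finset_subset_card_eq (k := finrank ℝ E + 2)
    (by exact_mod_cast Order.add_one_le_of_lt hsupp)
  obtain ⟨U, hU, hdisj⟩ := S.finite_toSet.t2_separation
  have hUm : ∀ y, MeasurableSet (U y) := fun y => (hU y).2.measurableSet
  have hUdisj : Pairwise (Disjoint on fun i : S => U i) := fun i j hij =>
    hdisj i.2 j.2 (Subtype.coe_injective.ne hij)
  obtain ⟨c, ⟨i₀, hi₀⟩, hc1, hcv⟩ := exists_abs_le_one_sum_smul_eq_zero
    (fun i : S => (γ.real (U i), ∫ y in U i, y ∂γ))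
    (by rw [Module.finrank_prod, Module.finrank_self, Fintype.card_coe, hcard]; omega)
  set f : E → ℝ := fun y => ∑ i : S, (U i).indicator (fun _ => c i) y with hf
  have hfm : Measurable f :=
    Finset.measurable_sum _ fun i _ => measurable_const.indicator (hUm i)
  refine ⟨f, ⟨hfm, abs_sum_indicator_const_le_one hUdisj hc1, ?_, ?_⟩, fun hf0 => ?_⟩
  · rw [hf, integral_finsetSum _ fun i _ => (integrable_const (c i)).indicator (hUm i)]
    simpa [integral_indicator_const _ (hUm _), Prod.fst_sum, mul_comm]
      using congrArg Prod.fst hcv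
  · have hsmul :
        (fun y => f y • y) = fun y => ∑ i : S, (U i).indicator (fun z => c i • z) y := by
      ext y
      rw [hf, Finset.sum_smul]
      exact Finset.sum_congr rfl fun i _ =>
        (Set.indicator_smul_apply_left _ _ (fun z => z) _).symm
    have hint : ∀ i : S, Integrable ((U i).indicator fun z => c i • z) γ := fun i =>
      (hid.smul (c i)).indicator (hUm i)
    calc ∫ y, f y • y ∂γ = ∑ i : S, c i • ∫ y in U i, y ∂γ := by
          rw [hsmul, integral_finsetSum _ fun i _ => hint i]
          exact Finset.sum_congr rfl fun i _ => by rw [integral_indicator (hUm i), integral_smul]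
      _ = 0 := by simpa [Prod.snd_sum] using congrArg Prod.snd hcv
  · have hpos : 0 < γ (U i₀) := (Measure.mem_support_iff_forall _).1 (hS i₀.2) _
      ((hU i₀).2.mem_nhds (hU i₀).1)
    refine hpos.ne' (measure_mono_null (fun y hy => ?_) (ae_iff.1 hf0))
    exact fun hy0 => hi₀ ((sum_indicator_const_of_mem hUdisj c hy).symm.trans hy0)

end BalancedPerturbation

theorem stmt4_general {n : ℕ} (K : Set (EuclideanSpace ℝ (Fin n)))
    (hKc : IsCompact K)
    (x : EuclideanSpace ℝ (Fin n))
    (γ : Measure (EuclideanSpace ℝ (Fin n))) [IsProbabilityMeasure γ]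
    (hγK : γ Kᶜ = 0) (hbar : ∫ y, y ∂γ = x)
    (hext : ∀ γ₁ γ₂ : Measure (EuclideanSpace ℝ (Fin n)),
      IsProbabilityMeasure γ₁ → IsProbabilityMeasure γ₂ →
      γ₁ Kᶜ = 0 → γ₂ Kᶜ = 0 → (∫ y, y ∂γ₁) = x → (∫ y, y ∂γ₂) = x →
      γ = (1/2 : ℝ≥0∞) • γ₁ + (1/2 : ℝ≥0∞) • γ₂ → γ₁ = γ ∧ γ₂ = γ) :
    ∃ S : Finset (EuclideanSpace ℝ (Fin n)), S.card ≤ n + 1 ∧ γ (↑S)ᶜ = 0 := by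
  have hid : Integrable id γ := integrable_id_of_isBounded hKc.isBounded hγK
  have hsupp : γ.support.encard ≤ n + 1 := by
    by_contra! hlt
    obtain ⟨f, hf, hf0⟩ :=
      exists_isBalancedPerturbation_not_ae_eq_zero hid (by simpa using hlt)
    have hf' := hf.neg
    obtain ⟨hfix, -⟩ := hext (γ.perturb f) (γ.perturb (-f))
      hf.isProbabilityMeasure_perturb hf'.isProbabilityMeasure_perturb
      (Measure.perturb_absolutelyContinuous hγK) (Measure.perturb_absolutelyContinuous hγK)
      (hbar ▸ hf.integral_id_perturb hid) (hbar ▸ hf'.integral_id_perturb hid)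
      (Measure.half_smul_perturb_add_perturb_neg hf.measurable hf.abs_le_one).symm
    exact hf0 (Measure.ae_eq_zero_of_perturb_eq_self hf.measurable hfix)
  obtain ⟨hfin, hcard⟩ := Set.encard_le_coe_iff_finite_ncard_le.1 hsupp
  refine ⟨hfin.toFinset, ?_, by simp⟩
  rwa [← Set.ncard_eq_toFinset_card _ hfin]

theorem stmt4 {n : ℕ} (K : Set (EuclideanSpace ℝ (Fin n)))
    (hK : Convex ℝ K) (hKc : IsCompact K) (hKint : (interior K).Nonempty)
    (x : EuclideanSpace ℝ (Fin n)) (hx : x ∈ K)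
    (γ : Measure (EuclideanSpace ℝ (Fin n))) [IsProbabilityMeasure γ]
    (hγK : γ Kᶜ = 0) (hbar : ∫ y, y ∂γ = x)
    (hext : ∀ γ₁ γ₂ : Measure (EuclideanSpace ℝ (Fin n)),
      IsProbabilityMeasure γ₁ → IsProbabilityMeasure γ₂ →
      γ₁ Kᶜ = 0 → γ₂ Kᶜ = 0 → (∫ y, y ∂γ₁) = x → (∫ y, y ∂γ₂) = x →
      γ = (1/2 : ℝ≥0∞) • γ₁ + (1/2 : ℝ≥0∞) • γ₂ → γ₁ = γ ∧ γ₂ = γ) :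
    ∃ S : Finset (EuclideanSpace ℝ (Fin n)), S.card ≤ n + 1 ∧ γ (↑S)ᶜ = 0 :=
  stmt4_general K hKc x γ hγK hbar hext
end

section
/- Let K ⊆ ℝⁿ be a convex body, x ∈ K, and let x₁,…,x_{d+1} ∈ K be affinely independent points (d ≤ n) with x = ∑_{i=1}^{d+1} λ_i x_i for positive weights λ_i summing to one. Then the measure ν = ∑_{i=1}^{d+1} λ_i δ_{x_i} is an extreme point of the set of Borel probability measures on K with barycentre x. -/
/-!
A probability measure concentrated on the finite set `{p i}` is `∑ i, μ {p i} • δ_{p i}`, and its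
barycentre is the convex combination `∑ i, μ.real {p i} • p i`. When the `p i` are affinely
independent, the barycentre determines these weights, so it determines the measure. If
`ν = ½ γ₁ + ½ γ₂`, then `γ₁` and `γ₂` are concentrated where `ν` is, namely on `{p i}`, and have
the same barycentre as `ν`; hence both equal `ν`.
-/

open MeasureTheory Set
open scoped ENNReal NNReal

theorem AffineIndependent.eq_of_sum_smul_eq {ι V : Type*} [Fintype ι] [AddCommGroup V]
    [Module ℝ V] {p : ι → V} (hp : AffineIndependent ℝ p) {w₁ w₂ : ι → ℝ}
    (h₁ : ∑ i, w₁ i = 1) (h₂ : ∑ i, w₂ i = 1) (h : ∑ i, w₁ i • p i = ∑ i, w₂ i • p i) :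
    w₁ = w₂ := by
  refine (affineIndependent_iff_eq_of_fintype_affineCombination_eq ℝ p).mp hp _ _ h₁ h₂ ?_
  rwa [Finset.univ.affineCombination_eq_linear_combination p _ h₁,
    Finset.univ.affineCombination_eq_linear_combination p _ h₂]

namespace MeasureTheory.Measure

variable {α ι : Type*} [MeasurableSpace α] [MeasurableSingletonClass α] [Fintype ι]

theorem sum_smul_dirac_apply_eq_zero {c : ι → ℝ≥0∞} {p : ι → α} {s : Set α}
    (hs : ∀ i, p i ∉ s) : (∑ i, c i • dirac (p i)) s = 0 := by
  simp [finsetSum_apply, dirac_apply, hs]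

theorem eq_sum_smul_dirac_of_measure_compl_range_eq_zero {p : ι → α} (hp : p.Injective)
    {μ : Measure α} (hμ : μ (range p)ᶜ = 0) : μ = ∑ i, μ {p i} • dirac (p i) :=
  calc μ = μ.restrict (⋃ i, {p i}) := by
        rw [iUnion_singleton_eq_range, restrict_eq_self_of_ae_mem (ae_iff.mpr hμ)]
    _ = ∑ i, μ {p i} • dirac (p i) := by
        rw [restrict_iUnion (fun i j hij ↦ disjoint_singleton.mpr (hp.ne hij))
          fun _ ↦ measurableSet_singleton _, sum_fintype]
        simp only [restrict_singleton]

theorem sum_measureReal_singleton_eq_one {p : ι → α} (hp : p.Injective) {μ : Measure α}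
    [IsProbabilityMeasure μ] (hμ : μ (range p)ᶜ = 0) : ∑ i, μ.real {p i} = 1 := by
  have h := congrArg (fun m : Measure α ↦ m univ)
    (eq_sum_smul_dirac_of_measure_compl_range_eq_zero hp hμ)
  simp only [measure_univ, finsetSum_apply, smul_apply, dirac_apply_of_mem (mem_univ _),
    smul_eq_mul, mul_one] at h
  simp only [measureReal_def]
  rw [← ENNReal.toReal_sum fun i _ ↦ measure_ne_top μ _, ← h, ENNReal.toReal_one]

end MeasureTheory.Measure

open Measure

theorem MeasureTheory.integral_sum_smul_dirac {α ι E : Type*} [MeasurableSpace α]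
    [MeasurableSingletonClass α] [Fintype ι] [NormedAddCommGroup E] [NormedSpace ℝ E]
    [CompleteSpace E] (f : α → E) (p : ι → α) {c : ι → ℝ≥0∞} (hc : ∀ i, c i ≠ ∞) :
    ∫ y, f y ∂(∑ i, c i • dirac (p i)) = ∑ i, (c i).toReal • f (p i) := by
  rw [integral_finsetSum_measure fun i _ ↦ (integrable_dirac enorm_lt_top).smul_measure (hc i)]
  simp only [integral_smul_measure, integral_dirac]

theorem AffineIndependent.measure_eq_of_integral_id_eq {ι E : Type*} [Fintype ι]
    [NormedAddCommGroup E] [NormedSpace ℝ E] [CompleteSpace E] [MeasurableSpace E]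
    [MeasurableSingletonClass E] {p : ι → E} (hp : AffineIndependent ℝ p) {μ ν : Measure E}
    [IsProbabilityMeasure μ] [IsProbabilityMeasure ν]
    (hμ : μ (range p)ᶜ = 0) (hν : ν (range p)ᶜ = 0) (h : ∫ y, y ∂μ = ∫ y, y ∂ν) : μ = ν := by
  have hμ_eq := eq_sum_smul_dirac_of_measure_compl_range_eq_zero hp.injective hμ
  have hν_eq := eq_sum_smul_dirac_of_measure_compl_range_eq_zero hp.injective hν
  have hweights : (fun i ↦ μ.real {p i}) = fun i ↦ ν.real {p i} := by
    refine hp.eq_of_sum_smul_eq (sum_measureReal_singleton_eq_one hp.injective hμ)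
      (sum_measureReal_singleton_eq_one hp.injective hν) ?_
    rw [hμ_eq, hν_eq, integral_sum_smul_dirac _ _ fun _ ↦ measure_ne_top _ _,
      integral_sum_smul_dirac _ _ fun _ ↦ measure_ne_top _ _] at h
    simpa only [measureReal_def] using h
  have hsingleton (i : ι) : μ {p i} = ν {p i} :=
    (ENNReal.toReal_eq_toReal_iff' (measure_ne_top _ _) (measure_ne_top _ _)).mp
      (congrFun hweights i)
  rw [hμ_eq, hν_eq]
  simp only [hsingleton]

theorem stmt5_general {n d : ℕ} (K : Set (EuclideanSpace ℝ (Fin n)))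
    (p : Fin (d + 1) → EuclideanSpace ℝ (Fin n)) (hp : ∀ i, p i ∈ K)
    (hind : AffineIndependent ℝ p)
    (l : Fin (d + 1) → ℝ≥0) (hsum : ∑ i, l i = 1)
    (x : EuclideanSpace ℝ (Fin n)) (hx : x = ∑ i, (l i : ℝ) • p i)
    (ν : Measure (EuclideanSpace ℝ (Fin n)))
    (hν : ν = ∑ i, ((l i : ℝ≥0∞) • Measure.dirac (p i))) :
    IsProbabilityMeasure ν ∧ ν Kᶜ = 0 ∧ (∫ y, y ∂ν) = x ∧
      (∀ γ₁ γ₂ : Measure (EuclideanSpace ℝ (Fin n)),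
        IsProbabilityMeasure γ₁ → IsProbabilityMeasure γ₂ →
        γ₁ Kᶜ = 0 → γ₂ Kᶜ = 0 → (∫ y, y ∂γ₁) = x → (∫ y, y ∂γ₂) = x →
        ν = (1/2 : ℝ≥0∞) • γ₁ + (1/2 : ℝ≥0∞) • γ₂ → γ₁ = ν ∧ γ₂ = ν) := by
  have hν_prob : IsProbabilityMeasure ν := ⟨by
    simp [hν, finsetSum_apply, ← ENNReal.ofNNReal_finsetSum, hsum]⟩
  have hν_bary : ∫ y, y ∂ν = x := by
    rw [hν, integral_sum_smul_dirac _ _ fun _ ↦ ENNReal.coe_ne_top, hx]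
    simp only [ENNReal.coe_toReal]
  have hν_range : ν (range p)ᶜ = 0 := hν ▸ sum_smul_dirac_apply_eq_zero (by simp)
  refine ⟨hν_prob, hν ▸ sum_smul_dirac_apply_eq_zero (by simpa using hp), hν_bary, ?_⟩
  intro γ₁ γ₂ _ _ _ _ hγ₁ hγ₂ hsplit
  have hγ_range : γ₁ (range p)ᶜ = 0 ∧ γ₂ (range p)ᶜ = 0 := by
    simpa [hsplit] using hν_range
  exact ⟨hind.measure_eq_of_integral_id_eq hγ_range.1 hν_range (hγ₁.trans hν_bary.symm),
    hind.measure_eq_of_integral_id_eq hγ_range.2 hν_range (hγ₂.trans hν_bary.symm)⟩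

theorem stmt5 {n d : ℕ} (hd : d ≤ n) (K : Set (EuclideanSpace ℝ (Fin n)))
    (hK : Convex ℝ K) (hKc : IsCompact K)
    (p : Fin (d + 1) → EuclideanSpace ℝ (Fin n)) (hp : ∀ i, p i ∈ K)
    (hind : AffineIndependent ℝ p)
    (l : Fin (d + 1) → ℝ≥0) (hl : ∀ i, 0 < l i) (hsum : ∑ i, l i = 1)
    (x : EuclideanSpace ℝ (Fin n)) (hx : x = ∑ i, (l i : ℝ) • p i)
    (ν : Measure (EuclideanSpace ℝ (Fin n)))
    (hν : ν = ∑ i, ((l i : ℝ≥0∞) • Measure.dirac (p i))) :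
    IsProbabilityMeasure ν ∧ ν Kᶜ = 0 ∧ (∫ y, y ∂ν) = x ∧
      (∀ γ₁ γ₂ : Measure (EuclideanSpace ℝ (Fin n)),
        IsProbabilityMeasure γ₁ → IsProbabilityMeasure γ₂ →
        γ₁ Kᶜ = 0 → γ₂ Kᶜ = 0 → (∫ y, y ∂γ₁) = x → (∫ y, y ∂γ₂) = x →
        ν = (1/2 : ℝ≥0∞) • γ₁ + (1/2 : ℝ≥0∞) • γ₂ → γ₁ = ν ∧ γ₂ = ν) :=
  stmt5_general K p hp hind l hsum x hx ν hν
end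

section
/- Let c : [a,b] × [a,b] → ℝ and suppose f : [a,b] → ℝ satisfies λ f(x) + (1−λ) f(y) − f(λx + (1−λ)y) ≤ λ c(λx+(1−λ)y, x) + (1−λ) c(λx+(1−λ)y, y) for all λ ∈ [0,1] and x, y ∈ [a,b]. Then for all a ≤ x₁ < x₂ < x₃ ≤ b: (f(x₃)−f(x₂))/(x₃−x₂) + (c(x₂,x₃)−c(x₂,x₁))/(x₃−x₁) − c(x₂,x₃)/(x₃−x₂) ≤ (f(x₃)−f(x₁))/(x₃−x₁) ≤ (f(x₂)−f(x₁))/(x₂−x₁) + (c(x₂,x₃)−c(x₂,x₁))/(x₃−x₁) + c(x₂,x₁)/(x₂−x₁). -/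
/-!
Apply the hypothesis with `x = x₁`, `y = x₃` and `λ = (x₃ - x₂) / (x₃ - x₁)`, so that
`λ x₁ + (1 - λ) x₃ = x₂`. Clearing the denominator `x₃ - x₁` gives a three-point inequality
whose defect, divided by `(x₃ - x₂)(x₃ - x₁)` or by `(x₂ - x₁)(x₃ - x₁)`, is exactly the gap in
the left or the right slope inequality.
-/

def PerturbedConcaveOn (s : Set ℝ) (c : ℝ → ℝ → ℝ) (f : ℝ → ℝ) : Prop :=
  ∀ l x y : ℝ, 0 ≤ l → l ≤ 1 → x ∈ s → y ∈ s →
    l * f x + (1 - l) * f y - f (l * x + (1 - l) * y) ≤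
      l * c (l * x + (1 - l) * y) x + (1 - l) * c (l * x + (1 - l) * y) y

/-- `x₃ - x₁` times the defect of the perturbed concavity inequality at `x₂ = λ x₁ + (1 - λ) x₃`. -/
def threePointDefect (c : ℝ → ℝ → ℝ) (f : ℝ → ℝ) (x₁ x₂ x₃ : ℝ) : ℝ :=
  (x₃ - x₂) * c x₂ x₁ + (x₂ - x₁) * c x₂ x₃ -
    ((x₃ - x₂) * f x₁ + (x₂ - x₁) * f x₃ - (x₃ - x₁) * f x₂)

theorem PerturbedConcaveOn.threePointDefect_nonneg {s : Set ℝ} {c : ℝ → ℝ → ℝ} {f : ℝ → ℝ}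
    (hf : PerturbedConcaveOn s c f) {x₁ x₂ x₃ : ℝ} (hx₁ : x₁ ∈ s) (hx₃ : x₃ ∈ s)
    (h12 : x₁ ≤ x₂) (h23 : x₂ ≤ x₃) (h13 : x₁ < x₃) :
    0 ≤ threePointDefect c f x₁ x₂ x₃ := by
  have h31 : 0 < x₃ - x₁ := sub_pos.2 h13
  set l := (x₃ - x₂) / (x₃ - x₁) with hl
  have hl1 : l ≤ 1 := (div_le_one h31).2 (by linarith)
  have hx₂ : l * x₁ + (1 - l) * x₃ = x₂ := by
    rw [hl]; field_simp; ring
  have key := hf l x₁ x₃ (div_nonneg (by linarith) h31.le) hl1 hx₁ hx₃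
  rw [hx₂] at key
  have hscaled : threePointDefect c f x₁ x₂ x₃ =
      (x₃ - x₁) * (l * c x₂ x₁ + (1 - l) * c x₂ x₃ - (l * f x₁ + (1 - l) * f x₃ - f x₂)) := by
    rw [threePointDefect, hl]; field_simp; ring
  rw [hscaled]
  exact mul_nonneg h31.le (sub_nonneg.2 key)

section Slopes

variable (c : ℝ → ℝ → ℝ) (f : ℝ → ℝ) {x₁ x₂ x₃ : ℝ}

theorem slope_sub_le_of_threePointDefect_nonneg (h12 : x₁ < x₂) (h23 : x₂ < x₃)
    (hD : 0 ≤ threePointDefect c f x₁ x₂ x₃) :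
    (f x₃ - f x₂) / (x₃ - x₂) + (c x₂ x₃ - c x₂ x₁) / (x₃ - x₁) - c x₂ x₃ / (x₃ - x₂)
      ≤ (f x₃ - f x₁) / (x₃ - x₁) := by
  have h32 : 0 < x₃ - x₂ := sub_pos.2 h23
  have h31 : 0 < x₃ - x₁ := by linarith
  rw [← sub_nonneg]
  have hgap : (f x₃ - f x₁) / (x₃ - x₁) -
      ((f x₃ - f x₂) / (x₃ - x₂) + (c x₂ x₃ - c x₂ x₁) / (x₃ - x₁) - c x₂ x₃ / (x₃ - x₂)) =
        threePointDefect c f x₁ x₂ x₃ / ((x₃ - x₂) * (x₃ - x₁)) := by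
    rw [threePointDefect]; field_simp; ring
  rw [hgap]
  positivity

theorem slope_le_add_of_threePointDefect_nonneg (h12 : x₁ < x₂) (h23 : x₂ < x₃)
    (hD : 0 ≤ threePointDefect c f x₁ x₂ x₃) :
    (f x₃ - f x₁) / (x₃ - x₁)
      ≤ (f x₂ - f x₁) / (x₂ - x₁) + (c x₂ x₃ - c x₂ x₁) / (x₃ - x₁) + c x₂ x₁ / (x₂ - x₁) := by
  have h21 : 0 < x₂ - x₁ := sub_pos.2 h12
  have h31 : 0 < x₃ - x₁ := by linarith
  rw [← sub_nonneg]
  have hgap : (f x₂ - f x₁) / (x₂ - x₁) + (c x₂ x₃ - c x₂ x₁) / (x₃ - x₁) +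
      c x₂ x₁ / (x₂ - x₁) - (f x₃ - f x₁) / (x₃ - x₁) =
        threePointDefect c f x₁ x₂ x₃ / ((x₂ - x₁) * (x₃ - x₁)) := by
    rw [threePointDefect]; field_simp; ring
  rw [hgap]
  positivity

end Slopes

theorem stmt7_general (a b : ℝ) (c : ℝ → ℝ → ℝ) (f : ℝ → ℝ)
    (h : ∀ l x y : ℝ, 0 ≤ l → l ≤ 1 → x ∈ Set.Icc a b → y ∈ Set.Icc a b →
      l * f x + (1 - l) * f y - f (l * x + (1 - l) * y) ≤
        l * c (l * x + (1 - l) * y) x + (1 - l) * c (l * x + (1 - l) * y) y)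
    (x₁ x₂ x₃ : ℝ) (h1 : a ≤ x₁) (h12 : x₁ < x₂) (h23 : x₂ < x₃) (h3 : x₃ ≤ b) :
    (f x₃ - f x₂) / (x₃ - x₂) + (c x₂ x₃ - c x₂ x₁) / (x₃ - x₁) - c x₂ x₃ / (x₃ - x₂)
      ≤ (f x₃ - f x₁) / (x₃ - x₁) ∧
    (f x₃ - f x₁) / (x₃ - x₁)
      ≤ (f x₂ - f x₁) / (x₂ - x₁) + (c x₂ x₃ - c x₂ x₁) / (x₃ - x₁)
        + c x₂ x₁ / (x₂ - x₁) := by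
  have hf : PerturbedConcaveOn (Set.Icc a b) c f := h
  have hD := hf.threePointDefect_nonneg ⟨h1, by linarith⟩ ⟨by linarith, h3⟩
    h12.le h23.le (h12.trans h23)
  exact ⟨slope_sub_le_of_threePointDefect_nonneg c f h12 h23 hD,
    slope_le_add_of_threePointDefect_nonneg c f h12 h23 hD⟩

theorem stmt7 (a b : ℝ) (hab : a < b) (c : ℝ → ℝ → ℝ) (f : ℝ → ℝ)
    (h : ∀ l x y : ℝ, 0 ≤ l → l ≤ 1 → x ∈ Set.Icc a b → y ∈ Set.Icc a b →
      l * f x + (1 - l) * f y - f (l * x + (1 - l) * y) ≤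
        l * c (l * x + (1 - l) * y) x + (1 - l) * c (l * x + (1 - l) * y) y)
    (x₁ x₂ x₃ : ℝ) (h1 : a ≤ x₁) (h12 : x₁ < x₂) (h23 : x₂ < x₃) (h3 : x₃ ≤ b) :
    (f x₃ - f x₂) / (x₃ - x₂) + (c x₂ x₃ - c x₂ x₁) / (x₃ - x₁) - c x₂ x₃ / (x₃ - x₂)
      ≤ (f x₃ - f x₁) / (x₃ - x₁) ∧
    (f x₃ - f x₁) / (x₃ - x₁)
      ≤ (f x₂ - f x₁) / (x₂ - x₁) + (c x₂ x₃ - c x₂ x₁) / (x₃ - x₁)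
        + c x₂ x₁ / (x₂ - x₁) :=
  stmt7_general a b c f h x₁ x₂ x₃ h1 h12 h23 h3
end

section
/- Let K ⊆ ℝⁿ be a convex set and c : K × K → ℝ a function that is L-Lipschitz in the second variable and satisfies |c(x,y)| ≤ Λ‖x−y‖ for all x,y ∈ K. Suppose f : K → ℝ satisfies λ f(x) + (1−λ) f(y) − f(λx + (1−λ)y) ≤ λ c(λx+(1−λ)y, x) + (1−λ) c(λx+(1−λ)y, y) for all x,y ∈ K and λ ∈ [0,1]. Then f is locally Lipschitz on the interior of K. -/
/-!
The hypothesis on `c` bounds the concavity defect of `f`: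
`a f x + b f y - f (a x + b y) ≤ 2Λ a b ‖x - y‖`. The classical proof that concave functions are
locally Lipschitz survives such a defect. Near an interior point `x₀`, `f` is bounded below on the
convex hull of an affine basis, the defect accumulating once per vertex; reflecting through `x₀`
bounds it above. Given bounds `m ≤ f ≤ M` on a ball, compare `f` at `x`, `y` and at the point `z`
at distance `ε` beyond `x` on the ray from `y`: the factor `a b` makes the defect of order
`‖x - y‖`, giving the Lipschitz constant `(M - m) / ε + 2Λ`.
-/

open Metric Set Finset Filter Topology

variable {E : Type*} [NormedAddCommGroup E] [NormedSpace ℝ E]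

def ApproxConcaveOn (δ : ℝ) (s : Set E) (f : E → ℝ) : Prop :=
  Convex ℝ s ∧ ∀ ⦃x⦄, x ∈ s → ∀ ⦃y⦄, y ∈ s → ∀ ⦃a b : ℝ⦄, 0 ≤ a → 0 ≤ b → a + b = 1 →
    a * f x + b * f y ≤ f (a • x + b • y) + δ * (a * b) * ‖x - y‖

lemma approxConcaveOn_of_le_cost {s : Set E} {f : E → ℝ} {c : E → E → ℝ} {Λ : ℝ}
    (hs : Convex ℝ s) (hc : ∀ x ∈ s, ∀ y ∈ s, |c x y| ≤ Λ * ‖x - y‖)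
    (hf : ∀ x ∈ s, ∀ y ∈ s, ∀ l : ℝ, l ∈ Icc (0 : ℝ) 1 →
      l * f x + (1 - l) * f y - f (l • x + (1 - l) • y) ≤
        l * c (l • x + (1 - l) • y) x + (1 - l) * c (l • x + (1 - l) • y) y) :
    ApproxConcaveOn (2 * Λ) s f := by
  refine ⟨hs, fun x hx y hy a b ha hb hab => ?_⟩
  obtain rfl : b = 1 - a := by linarith
  set m := a • x + (1 - a) • y
  have hm : m ∈ s := hs hx hy ha hb (by ring)
  have hcx : c m x ≤ Λ * ((1 - a) * ‖x - y‖) := by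
    have : ‖m - x‖ = (1 - a) * ‖x - y‖ := by
      rw [show m - x = (1 - a) • (y - x) by module, norm_smul, Real.norm_of_nonneg hb,
        norm_sub_rev]
    exact (le_abs_self _).trans (this ▸ hc m hm x hx)
  have hcy : c m y ≤ Λ * (a * ‖x - y‖) := by
    have : ‖m - y‖ = a * ‖x - y‖ := by
      rw [show m - y = a • (x - y) by module, norm_smul, Real.norm_of_nonneg ha]
    exact (le_abs_self _).trans (this ▸ hc m hm y hy)
  have := hf x hx y hy a ⟨ha, by linarith⟩
  linarith [mul_le_mul_of_nonneg_left hcx ha, mul_le_mul_of_nonneg_left hcy hb]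

namespace ApproxConcaveOn

variable {δ : ℝ} {s : Set E} {f : E → ℝ}

lemma min_sub_le_of_mem_segment (hf : ApproxConcaveOn δ s f) (hδ : 0 ≤ δ) {x y z : E}
    (hx : x ∈ s) (hy : y ∈ s) (hz : z ∈ segment ℝ x y) :
    min (f x) (f y) - δ * ‖x - y‖ ≤ f z := by
  obtain ⟨a, b, ha, hb, hab, rfl⟩ := hz
  have hmin : min (f x) (f y) ≤ a * f x + b * f y :=
    calc min (f x) (f y) = a * min (f x) (f y) + b * min (f x) (f y) := by
          rw [← add_mul, hab, one_mul]
      _ ≤ a * f x + b * f y := by gcongr <;> simp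
  have hdefect : δ * (a * b) * ‖x - y‖ ≤ δ * ‖x - y‖ := by
    have : a * b ≤ 1 := mul_le_one₀ (by linarith) hb (by linarith)
    calc δ * (a * b) * ‖x - y‖ ≤ δ * 1 * ‖x - y‖ := by gcongr
      _ = δ * ‖x - y‖ := by ring
  linarith [hf.2 hx hy ha hb hab]

lemma sub_le_of_mem_convexHull (hf : ApproxConcaveOn δ s f) (hδ : 0 ≤ δ) {t : Finset E}
    (ht : (t : Set E) ⊆ s) {m D : ℝ} (hm : ∀ y ∈ t, m ≤ f y)
    (hD : ∀ x ∈ convexHull ℝ (t : Set E), ∀ y ∈ convexHull ℝ (t : Set E), dist x y ≤ D) :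
    ∀ x ∈ convexHull ℝ (t : Set E), m - #t * (δ * D) ≤ f x := by
  classical
  induction t using Finset.induction_on with
  | empty => simp
  | insert a t hat ih =>
    have ha : a ∈ convexHull ℝ (↑(insert a t) : Set E) := subset_convexHull ℝ _ (by simp)
    have hδD : 0 ≤ δ * D := mul_nonneg hδ (dist_self a ▸ hD a ha a ha)
    rw [card_insert_of_notMem hat, Nat.cast_succ]
    rcases t.eq_empty_or_nonempty with rfl | hne
    · intro x hx
      obtain rfl : x = a := by simpa using hx
      simpa using (hm x (mem_singleton_self x)).trans' (by linarith : m - δ * D ≤ m)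
    have hts : (t : Set E) ⊆ s := (coe_subset.2 (Finset.subset_insert a t)).trans ht
    have hsub : convexHull ℝ (t : Set E) ⊆ convexHull ℝ (↑(insert a t) : Set E) :=
      convexHull_mono (by simp)
    have ih' := ih hts (fun y hy => hm y (mem_insert_of_mem hy))
      (fun x hx y hy => hD x (hsub hx) y (hsub hy))
    intro x hx
    rw [coe_insert, convexHull_insert (by simpa using hne), mem_convexJoin] at hx
    obtain ⟨a', rfl, y, hy, hx⟩ := hx
    have hstep :=
      hf.min_sub_le_of_mem_segment hδ (ht (by simp)) (convexHull_min hts hf.1 hy) hx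
    have hfa : m - #t * (δ * D) ≤ f a' := by
      have : 0 ≤ (#t : ℝ) * (δ * D) := by positivity
      linarith [hm a' (by simp)]
    have hmin := le_min hfa (ih' y hy)
    have hay : δ * ‖a' - y‖ ≤ δ * D := by
      gcongr
      exact dist_eq_norm a' y ▸ hD _ ha _ (hsub hy)
    linarith

lemma le_of_forall_ge_on_ball (hf : ApproxConcaveOn δ s f) (hδ : 0 ≤ δ) {x₀ : E} {r m : ℝ}
    (hr : ball x₀ r ⊆ s) (hm : ∀ y ∈ ball x₀ r, m ≤ f y) :
    ∀ y ∈ ball x₀ r, f y ≤ 2 * f x₀ - m + δ * r := by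
  intro y hy
  have hy' : (2 : ℝ) • x₀ - y ∈ ball x₀ r := by
    rw [mem_ball, dist_eq_norm, show (2 : ℝ) • x₀ - y - x₀ = x₀ - y by module, ← dist_eq_norm,
      dist_comm]
    exact hy
  have hmid := hf.2 (hr hy) (hr hy') (by norm_num : (0 : ℝ) ≤ 1 / 2)
    (by norm_num : (0 : ℝ) ≤ 1 / 2) (by norm_num)
  rw [show (1 / 2 : ℝ) • y + (1 / 2 : ℝ) • ((2 : ℝ) • x₀ - y) = x₀ by module] at hmid
  have hdist : ‖y - ((2 : ℝ) • x₀ - y)‖ ≤ 2 * r := by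
    rw [show y - ((2 : ℝ) • x₀ - y) = (2 : ℝ) • (y - x₀) by module, norm_smul,
      Real.norm_two]
    exact mul_le_mul_of_nonneg_left (mem_ball_iff_norm.1 hy).le zero_le_two
  linarith [hm _ hy', mul_le_mul_of_nonneg_left hdist hδ]

lemma mul_sub_le_of_extend (hf : ApproxConcaveOn δ s f) (hδ : 0 ≤ δ) {x y : E} (hxy : x ≠ y)
    {ε : ℝ} (hε : 0 < ε) (hy : y ∈ s) (hz : x + (ε / ‖x - y‖) • (x - y) ∈ s) :
    ε * (f y - f x) ≤
      ‖x - y‖ * (f x - f (x + (ε / ‖x - y‖) • (x - y))) + δ * ε * ‖x - y‖ := by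
  set d := ‖x - y‖
  set z := x + (ε / d) • (x - y)
  have hd : 0 < d := norm_sub_pos_iff.2 hxy
  have hyz : ‖y - z‖ ≤ ε + d := by
    calc ‖y - z‖ = ‖(y - x) - (ε / d) • (x - y)‖ := by simp only [z]; congr 1; abel
      _ ≤ ‖y - x‖ + ‖(ε / d) • (x - y)‖ := norm_sub_le _ _
      _ = ε + d := by
          rw [norm_sub_rev, norm_smul, Real.norm_of_nonneg (by positivity),
            div_mul_cancel₀ _ hd.ne', add_comm]
  have hxyz : (ε / (ε + d)) • y + (d / (ε + d)) • z = x := by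
    simp only [z]
    match_scalars <;> field_simp <;> ring
  have hconc := hf.2 hy hz (by positivity : 0 ≤ ε / (ε + d)) (by positivity : 0 ≤ d / (ε + d))
    (by field_simp)
  rw [hxyz] at hconc
  have hdefect : δ * (ε / (ε + d) * (d / (ε + d))) * ‖y - z‖ ≤ δ * ε * d / (ε + d) := by
    calc δ * (ε / (ε + d) * (d / (ε + d))) * ‖y - z‖
        ≤ δ * (ε / (ε + d) * (d / (ε + d))) * (ε + d) := by gcongr
      _ = δ * ε * d / (ε + d) := by field_simp
  have hcleared : ε / (ε + d) * f y + d / (ε + d) * f z ≤ f x + δ * ε * d / (ε + d) := by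
    linarith
  field_simp at hcleared
  linarith

lemma lipschitzOnWith_of_bounds (hf : ApproxConcaveOn δ s f) (hδ : 0 ≤ δ) {x₀ : E}
    {r ε m M : ℝ} (hε : 0 < ε) (hr : ball x₀ r ⊆ s) (hm : ∀ y ∈ ball x₀ r, m ≤ f y)
    (hM : ∀ y ∈ ball x₀ r, f y ≤ M) :
    LipschitzOnWith ((M - m) / ε + δ).toNNReal f (ball x₀ (r - ε)) := by
  have hsub : ball x₀ (r - ε) ⊆ ball x₀ r := ball_subset_ball (by linarith)
  have oneside {x y : E} (hx : x ∈ ball x₀ (r - ε)) (hy : y ∈ ball x₀ (r - ε)) :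
      f y - f x ≤ ((M - m) / ε + δ) * ‖x - y‖ := by
    obtain rfl | hxy := eq_or_ne x y
    · simp
    set z := x + (ε / ‖x - y‖) • (x - y)
    have hz : z ∈ ball x₀ r := mem_ball_iff_norm.2 <| by
      calc ‖z - x₀‖ ≤ ‖x - x₀‖ + ‖(ε / ‖x - y‖) • (x - y)‖ := by
            rw [show z - x₀ = (x - x₀) + (ε / ‖x - y‖) • (x - y) by simp only [z]; abel]
            exact norm_add_le _ _
        _ < r - ε + ε := by
            rw [norm_smul, Real.norm_of_nonneg (by positivity),
              div_mul_cancel₀ _ (norm_sub_pos_iff.2 hxy).ne']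
            exact add_lt_add_of_lt_of_le (mem_ball_iff_norm.1 hx) le_rfl
        _ = r := by ring
    have key := hf.mul_sub_le_of_extend hδ hxy hε (hr (hsub hy)) (hr hz)
    have hMm : ‖x - y‖ * (f x - f z) ≤ ‖x - y‖ * (M - m) :=
      mul_le_mul_of_nonneg_left (by linarith [hM x (hsub hx), hm z hz]) (norm_nonneg _)
    refine le_of_mul_le_mul_left ?_ hε
    rw [show ε * (((M - m) / ε + δ) * ‖x - y‖) = ‖x - y‖ * (M - m) + δ * ε * ‖x - y‖ by
      field_simp]
    linarith
  refine .of_dist_le' fun x hx y hy ↦ ?_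
  rw [Real.dist_eq, abs_sub_le_iff, dist_eq_norm]
  exact ⟨by rw [norm_sub_rev]; exact oneside hy hx, oneside hx hy⟩

variable [FiniteDimensional ℝ E]

lemma exists_forall_ge_on_nhds (hf : ApproxConcaveOn δ s f) (hδ : 0 ≤ δ) {x₀ : E}
    (hx₀ : x₀ ∈ interior s) : ∃ m, ∀ᶠ y in 𝓝 x₀, m ≤ f y := by
  obtain ⟨b, hx₀b, hbs⟩ :=
    exists_mem_interior_convexHull_affineBasis (mem_interior_iff_mem_nhds.1 hx₀)
  set t := (finite_range b).toFinset
  have ht : (t : Set E) = range b := Set.Finite.coe_toFinset _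
  obtain ⟨D, hD⟩ := isBounded_iff.1 (isBounded_convexHull.2 (finite_range b).isBounded)
  obtain ⟨m, hm⟩ := (t.finite_toSet.image f).bddBelow
  refine ⟨m - #t * (δ * D), ?_⟩
  filter_upwards [isOpen_interior.mem_nhds hx₀b] with y hy
  refine hf.sub_le_of_mem_convexHull hδ (ht ▸ (subset_convexHull ℝ _).trans hbs)
    (fun y hy => hm (mem_image_of_mem f hy)) (fun x hx y hy => hD (ht ▸ hx) (ht ▸ hy)) y
    (ht ▸ interior_subset hy)

theorem locallyLipschitzOn_interior (hf : ApproxConcaveOn δ s f) (hδ : 0 ≤ δ) :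
    LocallyLipschitzOn (interior s) f := by
  intro x₀ hx₀
  obtain ⟨m, hm⟩ := hf.exists_forall_ge_on_nhds hδ hx₀
  obtain ⟨r, hr, hball⟩ :=
    eventually_nhds_iff_ball.1 (hm.and (mem_interior_iff_mem_nhds.1 hx₀))
  have hrs : ball x₀ r ⊆ s := fun y hy => (hball y hy).2
  have hlip := hf.lipschitzOnWith_of_bounds hδ (half_pos hr) hrs (fun y hy => (hball y hy).1)
    (hf.le_of_forall_ge_on_ball hδ hrs fun y hy => (hball y hy).1)
  rw [sub_half] at hlip
  exact ⟨_, ball x₀ (r / 2), mem_nhdsWithin_of_mem_nhds (ball_mem_nhds _ (half_pos hr)), hlip⟩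

end ApproxConcaveOn

theorem stmt8_general {n : ℕ} (K : Set (EuclideanSpace ℝ (Fin n))) (hK : Convex ℝ K)
    (c : EuclideanSpace ℝ (Fin n) → EuclideanSpace ℝ (Fin n) → ℝ)
    (Λ : ℝ) (hΛ : 0 ≤ Λ)
    (hcΛ : ∀ x ∈ K, ∀ y ∈ K, |c x y| ≤ Λ * ‖x - y‖)
    (f : EuclideanSpace ℝ (Fin n) → ℝ)
    (hf : ∀ x ∈ K, ∀ y ∈ K, ∀ l : ℝ, l ∈ Set.Icc (0 : ℝ) 1 →
      l * f x + (1 - l) * f y - f (l • x + (1 - l) • y) ≤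
        l * c (l • x + (1 - l) • y) x + (1 - l) * c (l • x + (1 - l) • y) y) :
    ∀ x ∈ interior K, ∃ ε > (0 : ℝ), ∃ C : ℝ,
      ∀ y ∈ Metric.ball x ε, ∀ z ∈ Metric.ball x ε, |f y - f z| ≤ C * dist y z := by
  intro x hx
  obtain ⟨C, t, ht, hC⟩ :=
    (approxConcaveOn_of_le_cost hK hcΛ hf).locallyLipschitzOn_interior (by positivity) hx
  rw [isOpen_interior.nhdsWithin_eq hx] at ht
  obtain ⟨ε, hε, hεt⟩ := Metric.mem_nhds_iff.1 ht
  refine ⟨ε, hε, C, fun y hy z hz => ?_⟩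
  rw [← Real.dist_eq]
  exact (hC.mono hεt).dist_le_mul y hy z hz

theorem stmt8 {n : ℕ} (K : Set (EuclideanSpace ℝ (Fin n))) (hK : Convex ℝ K)
    (c : EuclideanSpace ℝ (Fin n) → EuclideanSpace ℝ (Fin n) → ℝ)
    (L Λ : ℝ) (hL : 0 ≤ L) (hΛ : 0 ≤ Λ)
    (hcL : ∀ x ∈ K, ∀ y ∈ K, ∀ z ∈ K, |c x y - c x z| ≤ L * ‖y - z‖)
    (hcΛ : ∀ x ∈ K, ∀ y ∈ K, |c x y| ≤ Λ * ‖x - y‖)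
    (f : EuclideanSpace ℝ (Fin n) → ℝ)
    (hf : ∀ x ∈ K, ∀ y ∈ K, ∀ l : ℝ, l ∈ Set.Icc (0 : ℝ) 1 →
      l * f x + (1 - l) * f y - f (l • x + (1 - l) • y) ≤
        l * c (l • x + (1 - l) • y) x + (1 - l) * c (l • x + (1 - l) • y) y) :
    ∀ x ∈ interior K, ∃ ε > (0 : ℝ), ∃ C : ℝ,
      ∀ y ∈ Metric.ball x ε, ∀ z ∈ Metric.ball x ε, |f y - f z| ≤ C * dist y z :=
  stmt8_general K hK c Λ hΛ hcΛ f hf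
end
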